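/- For all integers x ≥ 1 and m ≥ x+1, if c′ ∈ C(m+1,x) starts, from the left, with 1 followed by x+1 zeros (Group 4), and c″ denotes the binary word formed by the m−x rightmost bits of c′, then c″ ∈ C(m−x,x) and 2·(g(m+1,x,c′) − g(m−x,x,c″)) = N(m+1,x); that is, the shift in codeword indices for Group 4 is ζ₄ = (1/2) N(m+1,x). -/

import Mathlib

/-!
A codeword `d` of length `m + 1` precedes `c'` either because its top bit is `0`, or because it
starts with `1 0^x` like `c'` and its `m - x` lowest bits precede `c''`. Complementing all bits
shows the first kind makes up half of `C(m + 1, x)`. For the second kind, the `x + 1` zeros of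
`c'` below its top bit isolate the low part, so taking the `m - x` lowest bits is a bijection
from them onto the codewords of `C(m - x, x)` preceding `c''`, of which there are `g(c'')`.
-/

/-- `noForbidden m x c` says the binary word `c = (c_{m-1}, …, c_0)` contains no contiguous
subword of the form `0 1^y 0` or `1 0^y 1` for any `1 ≤ y ≤ x`. -/
def noForbidden (m x : ℕ) (c : Fin m → Bool) : Prop :=
  ∀ j y : ℕ, 1 ≤ y → y ≤ x → (h : j + y + 1 < m) →
    ¬ ((∀ k, 1 ≤ k → (hk : k ≤ y) → c ⟨j + k, by omega⟩ = ! c ⟨j, by omega⟩) ∧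
        c ⟨j + y + 1, h⟩ = c ⟨j, by omega⟩)

/-- `N(m, x)`: the cardinality of the LOCO code `C(m, x)`. -/
noncomputable def locoN (m x : ℕ) : ℕ := Nat.card {c : Fin m → Bool // noForbidden m x c}

/-- `N(k, x)` extended to integer `k` by the convention `N(k, x) = 2` for `k ≤ 1`. -/
noncomputable def Nex (k : ℤ) (x : ℕ) : ℤ := if k ≤ 1 then 2 else (locoN k.toNat x : ℤ)

/-- Strict lexicographic order on binary words, comparing bits from `c_{m-1}`
(most significant) down to `c_0`, with `0 < 1`. -/
def lexLt (m : ℕ) (d c : Fin m → Bool) : Prop :=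
  ∃ i : Fin m, d i = false ∧ c i = true ∧ ∀ j : Fin m, (i : ℕ) < (j : ℕ) → d j = c j

/-- The index `g(m, x, c)` of a codeword: the number of codewords of `C(m, x)` that
precede `c` in lexicographic order. -/
noncomputable def locoIdx (m x : ℕ) (c : Fin m → Bool) : ℕ :=
  Nat.card {d : Fin m → Bool // noForbidden m x d ∧ lexLt m d c}


section Words

variable {M n x : ℕ}

def HasForbiddenAt (w : Fin M → Bool) (j y : ℕ) (h : j + y + 1 < M) : Prop :=
  (∀ k, 1 ≤ k → (hk : k ≤ y) → w ⟨j + k, by omega⟩ = ! w ⟨j, by omega⟩) ∧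
    w ⟨j + y + 1, h⟩ = w ⟨j, by omega⟩

theorem noForbidden_iff {w : Fin M → Bool} :
    noForbidden M x w ↔ ∀ j y, 1 ≤ y → y ≤ x → ∀ h, ¬ HasForbiddenAt w j y h :=
  Iff.rfl

theorem HasForbiddenAt.congr {w c : Fin M → Bool} {j y : ℕ} {h : j + y + 1 < M}
    (hw : HasForbiddenAt w j y h)
    (hwc : ∀ i : Fin M, j ≤ ↑i → ↑i ≤ j + y + 1 → w i = c i) :
    HasForbiddenAt c j y h := by
  obtain ⟨hmid, hend⟩ := hw
  refine ⟨fun k hk1 hk2 => ?_, ?_⟩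
  · rw [← hwc _ (by simp) (by simp; omega), ← hwc ⟨j, by omega⟩ le_rfl (by simp; omega)]
    exact hmid k hk1 hk2
  · rw [← hwc _ (by simp; omega) le_rfl, ← hwc ⟨j, by omega⟩ le_rfl (by simp; omega)]
    exact hend

theorem noForbidden_not {w : Fin M → Bool} (hw : noForbidden M x w) :
    noForbidden M x (fun i => ! w i) := by
  rintro j y hy1 hy2 h ⟨hmid, hend⟩
  exact hw j y hy1 hy2 h
    ⟨fun k hk1 hk2 => Bool.not_inj (hmid k hk1 hk2), Bool.not_inj hend⟩

theorem noForbidden_comp_castLE (hn : n ≤ M) {w : Fin M → Bool} (hw : noForbidden M x w) :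
    noForbidden n x (w ∘ Fin.castLE hn) :=
  fun j y hy1 hy2 h => hw j y hy1 hy2 (h.trans_le hn)

def spliceLow (w : Fin M → Bool) (e : Fin n → Bool) : Fin M → Bool :=
  fun i => if h : (i : ℕ) < n then e ⟨i, h⟩ else w i

theorem spliceLow_of_lt (w : Fin M → Bool) (e : Fin n → Bool) {i : Fin M} (hi : (i : ℕ) < n) :
    spliceLow w e i = e ⟨i, hi⟩ :=
  dif_pos hi

theorem spliceLow_of_le (w : Fin M → Bool) (e : Fin n → Bool) {i : Fin M} (hi : n ≤ (i : ℕ)) :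
    spliceLow w e i = w i :=
  dif_neg (by omega)

theorem spliceLow_comp_castLE (hn : n ≤ M) (w : Fin M → Bool) (e : Fin n → Bool) :
    spliceLow w e ∘ Fin.castLE hn = e :=
  funext fun i => spliceLow_of_lt w e i.isLt

theorem spliceLow_comp_castLE_self (hn : n ≤ M) {w d : Fin M → Bool}
    (hdw : ∀ j : Fin M, n ≤ ↑j → d j = w j) : spliceLow w (d ∘ Fin.castLE hn) = d := by
  funext i
  by_cases hi : (i : ℕ) < n
  · exact spliceLow_of_lt w _ hi
  · rw [spliceLow_of_le w _ (not_lt.1 hi), hdw i (not_lt.1 hi)]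

/-- The zeros of `w` at positions `n - 1, …, n + x - 1`, with the zero top bit of `e`, shield
the junction: a forbidden subword straddling position `n - 1` would have a `0` inside and hence
a `1` at its upper end, which lies in that block of zeros. -/
theorem noForbidden_spliceLow (hn : n ≤ M) {w : Fin M → Bool} {e : Fin n → Bool}
    (hw : noForbidden M x w) (he : noForbidden n x e)
    (he_top : ∀ j : Fin n, n ≤ ↑j + 1 → e j = false)
    (hzero : ∀ j : Fin M, n ≤ ↑j + 1 → ↑j < n + x → w j = false) :
    noForbidden M x (spliceLow w e) := by
  rw [noForbidden_iff]
  intro j y hy1 hy2 h hf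
  rcases lt_or_ge (j + y + 1) n with hlow | hhigh
  · refine he j y hy1 hy2 hlow ?_
    rw [← spliceLow_comp_castLE hn w e]
    exact hf
  rcases le_or_gt n (j + 1) with hup | hcross
  · refine hw j y hy1 hy2 h (hf.congr fun i hi _ => ?_)
    rcases lt_or_ge (i : ℕ) n with hin | hin
    · rw [spliceLow_of_lt w e hin, he_top _ (by simp; omega), hzero i (by omega) (by omega)]
    · exact spliceLow_of_le w e hin
  · have hjunction : spliceLow w e ⟨j + (n - 1 - j), by omega⟩ = false := by
      rw [spliceLow_of_lt w e (by simp; omega)]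
      exact he_top _ (by simp; omega)
    have hend : spliceLow w e ⟨j + y + 1, h⟩ = false := by
      rw [spliceLow_of_le w e (by simp; omega)]
      exact hzero _ (by simp; omega) (by simp; omega)
    have hstart := hf.1 (n - 1 - j) (by omega) (by omega)
    rw [hjunction, hf.2.symm.trans hend] at hstart
    exact Bool.false_ne_true hstart

end Words

section Lex

variable {M n : ℕ}

theorem lexLt_of_last {m : ℕ} {d c : Fin (m + 1) → Bool}
    (hd : d (Fin.last m) = false) (hc : c (Fin.last m) = true) : lexLt (m + 1) d c :=
  ⟨Fin.last m, hd, hc, fun j hj => absurd hj (not_lt.2 (Fin.le_last j))⟩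

/-- The first position where `d` and `c` differ carries a `1` of `c` but not of `d`, so it lies
below `a`. -/
theorem lexLt.eq_of_le {d c : Fin M → Bool} (h : lexLt M d c) {a : ℕ}
    (hc : ∀ j : Fin M, a ≤ ↑j → c j = true → d j = true) :
    ∀ j : Fin M, a ≤ ↑j → d j = c j := by
  obtain ⟨i, hdi, hci, hagree⟩ := h
  have hia : (i : ℕ) < a := by
    by_contra! hai
    simp [hc i hai hci] at hdi
  exact fun j hj => hagree j (hia.trans_le hj)

theorem lexLt_comp_castLE_iff (hn : n ≤ M) {d c : Fin M → Bool}
    (hdc : ∀ j : Fin M, n ≤ ↑j → d j = c j) :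
    lexLt n (d ∘ Fin.castLE hn) (c ∘ Fin.castLE hn) ↔ lexLt M d c := by
  constructor
  · rintro ⟨i, hdi, hci, hagree⟩
    refine ⟨Fin.castLE hn i, hdi, hci, fun j hij => ?_⟩
    rcases lt_or_ge (j : ℕ) n with hjn | hjn
    · exact hagree ⟨j, hjn⟩ hij
    · exact hdc j hjn
  · rintro ⟨i, hdi, hci, hagree⟩
    have hin : (i : ℕ) < n := by
      by_contra! hni
      simp [hdc i hni, hci] at hdi
    exact ⟨⟨i, hin⟩, hdi, hci, fun j hij => hagree _ hij⟩

theorem lexLt.last_eq_true_iff {m : ℕ} {d c : Fin (m + 1) → Bool} (h : lexLt (m + 1) d c)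
    (hn : n ≤ m) (hc : ∀ j : Fin (m + 1), n ≤ ↑j → (c j = true ↔ j = Fin.last m)) :
    d (Fin.last m) = true ↔ ∀ j : Fin (m + 1), n ≤ ↑j → d j = c j := by
  constructor
  · intro hd
    exact h.eq_of_le fun j hj hcj => (hc j hj).1 hcj ▸ hd
  · intro hdc
    rw [hdc _ hn, hc _ hn]

end Lex

theorem Nat.card_subtype_eq_card_and_add_card_and_not {α : Type*} [Finite α] (p q : α → Prop) :
    Nat.card {a // p a} = Nat.card {a // p a ∧ q a} + Nat.card {a // p a ∧ ¬ q a} := by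
  classical
  rw [← Nat.card_sum]
  exact Nat.card_congr <| (Equiv.sumCompl fun a : {a // p a} => q a).symm.trans <|
    Equiv.sumCongr (Equiv.subtypeSubtypeEquivSubtypeInter p q)
      (Equiv.subtypeSubtypeEquivSubtypeInter p fun a => ¬ q a)

section Counting

variable {M n x : ℕ}

theorem Nex_natCast {k : ℕ} (hk : 2 ≤ k) : Nex k x = locoN k x := by
  rw [Nex, if_neg (by omega), Int.toNat_natCast]

/-- Complementing every bit is an involution of `C(m + 1, x)` exchanging the codewords with
top bit `0` and those with top bit `1`. -/
theorem locoN_succ_eq_two_mul (m : ℕ) :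
    locoN (m + 1) x =
      2 * Nat.card {d : Fin (m + 1) → Bool // noForbidden (m + 1) x d ∧ d (Fin.last m) = false} := by
  have hcompl : {d : Fin (m + 1) → Bool // noForbidden (m + 1) x d ∧ ¬ d (Fin.last m) = false} ≃
      {d : Fin (m + 1) → Bool // noForbidden (m + 1) x d ∧ d (Fin.last m) = false} :=
    { toFun := fun d => ⟨fun i => ! d.1 i, noForbidden_not d.2.1, by simpa using d.2.2⟩
      invFun := fun d => ⟨fun i => ! d.1 i, noForbidden_not d.2.1, by simp [d.2.2]⟩
      left_inv := fun d => Subtype.ext (funext fun i => Bool.not_not _)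
      right_inv := fun d => Subtype.ext (funext fun i => Bool.not_not _) }
  rw [locoN, Nat.card_subtype_eq_card_and_add_card_and_not _ fun d => d (Fin.last m) = false,
    Nat.card_congr hcompl, two_mul]

theorem locoIdx_eq_add_of_last {m : ℕ} {c : Fin (m + 1) → Bool} (hc : c (Fin.last m) = true) :
    locoIdx (m + 1) x c =
      Nat.card {d : Fin (m + 1) → Bool // noForbidden (m + 1) x d ∧ d (Fin.last m) = false} +
      Nat.card {d : Fin (m + 1) → Bool //
        noForbidden (m + 1) x d ∧ lexLt (m + 1) d c ∧ d (Fin.last m) = true} := by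
  rw [locoIdx, Nat.card_subtype_eq_card_and_add_card_and_not _ fun d => d (Fin.last m) = false]
  congr 1
  · exact Nat.card_congr <| Equiv.subtypeEquivRight fun d =>
      ⟨fun h => ⟨h.1.1, h.2⟩, fun h => ⟨⟨h.1, lexLt_of_last h.2 hc⟩, h.2⟩⟩
  · exact Nat.card_congr <| Equiv.subtypeEquivRight fun _ => by simp [and_assoc]

/-- The bijection takes `d` to its `n` lowest bits; its inverse is `spliceLow c`. -/
theorem card_lexLt_of_eqOn_high (hn : n ≤ M) {c : Fin M → Bool} (hc : noForbidden M x c)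
    (hzero : ∀ j : Fin M, n ≤ ↑j + 1 → ↑j < n + x → c j = false) :
    Nat.card {d : Fin M → Bool //
        noForbidden M x d ∧ lexLt M d c ∧ ∀ j : Fin M, n ≤ ↑j → d j = c j} =
      locoIdx n x (c ∘ Fin.castLE hn) := by
  have he_top : ∀ e : Fin n → Bool, lexLt n e (c ∘ Fin.castLE hn) →
      ∀ j : Fin n, n ≤ ↑j + 1 → e j = false := fun e he j hj =>
    (he.eq_of_le (a := n - 1) (fun i hi hci => by
      simp [hzero (Fin.castLE hn i) (by simp; omega) (by simp; omega)] at hci)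
      j (by omega)).trans (hzero (Fin.castLE hn j) hj (by simp; omega))
  refine Nat.card_congr
    { toFun := fun d => ⟨d.1 ∘ Fin.castLE hn, noForbidden_comp_castLE hn d.2.1,
        (lexLt_comp_castLE_iff hn d.2.2.2).2 d.2.2.1⟩
      invFun := fun e => ⟨spliceLow c e.1,
        noForbidden_spliceLow hn hc e.2.1 (he_top e.1 e.2.2) hzero,
        (lexLt_comp_castLE_iff hn fun j hj => spliceLow_of_le c e.1 hj).1
          (by rw [spliceLow_comp_castLE]; exact e.2.2),
        fun j hj => spliceLow_of_le c e.1 hj⟩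
      left_inv := fun d => Subtype.ext (spliceLow_comp_castLE_self hn d.2.2.2)
      right_inv := fun e => Subtype.ext (spliceLow_comp_castLE hn c e.1) }

end Counting

/-- For all `x ≥ 1` and `m ≥ x + 1`, if `c' ∈ C(m + 1, x)` starts from the
left with `1` followed by `x + 1` zeros (Group 4), and `c''` is the word formed by the
`m - x` rightmost bits of `c'`, then `c'' ∈ C(m - x, x)` and
`2 (g(m + 1, x, c') - g(m - x, x, c'')) = N(m + 1, x)`, i.e. the index shift is
`ζ₄ = (1/2) N(m + 1, x)`. -/
theorem loco_group4_shift (m x : ℕ) (hm : x + 1 ≤ m)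
    (c' : Fin (m + 1) → Bool) (hc' : noForbidden (m + 1) x c')
    (h0 : c' ⟨m, by omega⟩ = true)
    (h1 : ∀ k, 1 ≤ k → k ≤ x + 1 → c' ⟨m - k, by omega⟩ = false) :
    noForbidden (m - x) x
      (fun i : Fin (m - x) => c' ⟨(i : ℕ), lt_of_lt_of_le i.isLt (by omega)⟩) ∧
    2 * ((locoIdx (m + 1) x c' : ℤ)
          - (locoIdx (m - x) x
              (fun i : Fin (m - x) => c' ⟨(i : ℕ), lt_of_lt_of_le i.isLt (by omega)⟩) : ℤ))
      = Nex ((m : ℤ) + 1) x := by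
  have hn : m - x ≤ m + 1 := by omega
  have hzero : ∀ j : Fin (m + 1), m - x ≤ ↑j + 1 → ↑j < m - x + x → c' j = false :=
    fun j hj₁ hj₂ => by simpa [show m - (m - j) = j by omega] using h1 (m - j) (by omega) (by omega)
  have hhigh : ∀ j : Fin (m + 1), m - x ≤ ↑j → (c' j = true ↔ j = Fin.last m) := by
    intro j hj
    refine ⟨fun hcj => Fin.ext ?_, fun hj => hj ▸ h0⟩
    by_contra hjm
    simp [hzero j (by omega) (by have := j.isLt; simp at hjm; omega)] at hcj
  have hlow : locoIdx (m - x) x (c' ∘ Fin.castLE hn) = Nat.card {d : Fin (m + 1) → Bool //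
      noForbidden (m + 1) x d ∧ lexLt (m + 1) d c' ∧ d (Fin.last m) = true} := by
    rw [← card_lexLt_of_eqOn_high hn hc' hzero]
    exact Nat.card_congr <| Equiv.subtypeEquivRight fun _ => and_congr_right fun _ =>
      and_congr_right fun hlt => (hlt.last_eq_true_iff (by omega) hhigh).symm
  refine ⟨noForbidden_comp_castLE hn hc', ?_⟩
  change 2 * ((locoIdx (m + 1) x c' : ℤ) - locoIdx (m - x) x (c' ∘ Fin.castLE hn)) = _
  rw [show (m : ℤ) + 1 = ((m + 1 : ℕ) : ℤ) by push_cast; ring, Nex_natCast (by omega),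
    locoN_succ_eq_two_mul, locoIdx_eq_add_of_last h0, hlow]
  push_cast
  ring
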